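/- arXiv:1610.05087 — 2 statements merged into one kernel-verified Lean document; each statement's English description precedes it below -/
import Mathlib

section
/- For p an odd prime, ε_p √p ∈ ℤ[ζ_p], where ε_p = 1 if p ≡ 1 (mod 4) and ε_p = i if p ≡ 3 (mod 4); consequently √p ∈ ℤ[ζ_{4p}]. -/
-- STATEMENT 9: ε_p √p ∈ ℤ[ζ_p] (Gauss sum evaluation), hence √p ∈ ℤ[ζ_{4p}].
theorem stmt9 (p : ℕ) (hp : p.Prime) (hodd : Odd p) :
    (if p % 4 = 1 then (1 : ℂ) else Complex.I) * (Real.sqrt p : ℂ) ∈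
        Algebra.adjoin ℤ ({Complex.exp (2 * Real.pi * Complex.I / p)} : Set ℂ) ∧
      (Real.sqrt p : ℂ) ∈
        Algebra.adjoin ℤ ({Complex.exp (2 * Real.pi * Complex.I / (4 * p))} : Set ℂ) := by
  haveI : Fact p.Prime := ⟨hp⟩
  haveI : NeZero p := ⟨hp.ne_zero⟩
  have hp2 : p ≠ 2 := by
    rintro rfl
    exact ((by decide : ¬ Odd 2)) hodd
  have hchar : ringChar (ZMod p) ≠ 2 := by
    rw [ZMod.ringChar_zmod_n]; exact hp2
  set ζ : ℂ := Complex.exp (2 * Real.pi * Complex.I / p) with hζ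
  set S := Algebra.adjoin ℤ ({ζ} : Set ℂ) with hS
  set χ : MulChar (ZMod p) ℂ :=
    (quadraticChar (ZMod p)).ringHomComp (Int.castRingHom ℂ) with hχ
  have hχ1 : χ ≠ 1 :=
    (MulChar.ringHomComp_ne_one_iff (fun a b h => by simpa using h)).mpr
      (quadraticChar_ne_one hchar)
  have hχ2 : χ.IsQuadratic := (quadraticChar_isQuadratic (ZMod p)).comp _
  have hsq := gaussSum_sq hχ1 hχ2 (ZMod.isPrimitive_stdAddChar p)
  -- the Gauss sum lies in S
  have hζmem : ζ ∈ S := Algebra.subset_adjoin (Set.mem_singleton ζ)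
  have hstd : ∀ x : ZMod p, ZMod.stdAddChar x = ζ ^ x.val := by
    intro x
    rw [ZMod.stdAddChar_apply, ZMod.toCircle_apply, hζ, ← Complex.exp_nat_mul]
    ring_nf
  have hg : gaussSum χ ZMod.stdAddChar ∈ S := by
    rw [gaussSum]
    refine Subalgebra.sum_mem S fun x _ => ?_
    rw [hstd x]
    refine Subalgebra.mul_mem S ?_ (Subalgebra.pow_mem S hζmem _)
    have : χ x = ((quadraticChar (ZMod p) x : ℤ) : ℂ) := rfl
    rw [this]
    exact Subalgebra.intCast_mem S _
  -- compute χ(-1) * card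
  have hcard : (Fintype.card (ZMod p) : ℂ) = (p : ℂ) := by
    rw [ZMod.card p]
  have hm4 : p % 4 = 1 ∨ p % 4 = 3 := Nat.odd_mod_four_iff.mp (Nat.odd_iff.mp hodd)
  have hχneg : χ (-1) = ((quadraticChar (ZMod p) (-1) : ℤ) : ℂ) := rfl
  have hq4 : quadraticChar (ZMod p) (-1) = ZMod.χ₄ p := by
    rw [quadraticChar_neg_one hchar, ZMod.card p]
  -- set s = ε √p and show s² = gaussSum²
  set s : ℂ := (if p % 4 = 1 then (1 : ℂ) else Complex.I) * (Real.sqrt p : ℂ) with hs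
  have hsqrt : ((Real.sqrt p : ℂ)) ^ 2 = (p : ℂ) := by
    rw [← Complex.ofReal_pow, Real.sq_sqrt (Nat.cast_nonneg p)]
    norm_cast
  have hs2 : s ^ 2 = gaussSum χ ZMod.stdAddChar ^ 2 := by
    rw [hsq, hχneg, hq4, hcard, hs, mul_pow, hsqrt]
    rcases hm4 with h | h
    · rw [if_pos h, ZMod.χ₄_nat_one_mod_four h]
      norm_num
    · rw [if_neg (by omega), ZMod.χ₄_nat_three_mod_four h]
      norm_num [Complex.I_sq]
  have hsS : s ∈ S := by
    have h0 : (s - gaussSum χ ZMod.stdAddChar) * (s + gaussSum χ ZMod.stdAddChar) = 0 := by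
      linear_combination hs2
    rcases mul_eq_zero.mp h0 with h | h
    · rw [sub_eq_zero] at h; rw [h]; exact hg
    · rw [eq_neg_of_add_eq_zero_left h]
      exact Subalgebra.neg_mem S hg
  refine ⟨hsS, ?_⟩
  -- second part: work in T = adjoin ℤ {η}, η = exp(2πI/(4p))
  set η : ℂ := Complex.exp (2 * Real.pi * Complex.I / (4 * p)) with hη
  set T := Algebra.adjoin ℤ ({η} : Set ℂ) with hT
  have hηmem : η ∈ T := Algebra.subset_adjoin (Set.mem_singleton η)
  have hζη : ζ = η ^ 4 := by
    rw [hζ, hη, ← Complex.exp_nat_mul]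
    congr 1
    have hp0 : (p : ℂ) ≠ 0 := Nat.cast_ne_zero.mpr hp.ne_zero
    field_simp
    ring
  have hIη : Complex.I = η ^ p := by
    rw [hη, ← Complex.exp_nat_mul]
    have hp0 : (p : ℂ) ≠ 0 := Nat.cast_ne_zero.mpr hp.ne_zero
    have : (p : ℂ) * (2 * Real.pi * Complex.I / (4 * p)) =
        (Real.pi / 2 : ℝ) * Complex.I := by
      push_cast
      field_simp
      ring
    rw [this, Complex.exp_mul_I]
    simp [Real.cos_pi_div_two, Real.sin_pi_div_two]
  have hST : S ≤ T := by
    rw [hS]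
    refine Algebra.adjoin_le ?_
    intro x hx
    rw [Set.mem_singleton_iff] at hx
    rw [hx, hζη]
    exact Subalgebra.pow_mem T hηmem 4
  have hsT : s ∈ T := hST hsS
  have hIT : Complex.I ∈ T := by rw [hIη]; exact Subalgebra.pow_mem T hηmem p
  rcases hm4 with h | h
  · rw [hs, if_pos h, one_mul] at hsT
    exact hsT
  · have : (Real.sqrt p : ℂ) = (-Complex.I) * s := by
      rw [hs, if_neg (by omega)]
      have := Complex.I_sq
      ring_nf
      rw [Complex.I_sq]
      ring
    rw [this]
    exact Subalgebra.mul_mem T (Subalgebra.neg_mem T hIT) hsT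
end

section
/- Let G be a finite group, F_l a finite field, tr : G → F_l a function, and Z_1, Z_2, ... independent random variables each distributed as tr(X) with X uniform on G. For a finite family of finite subsets I(k) ⊆ ℕ indexed by k ∈ I, set S(I(k)) = Σ_{i ∈ I(k)} Z_i and Φ(I, a) = |{k : S(I(k)) = a}|/|I|. Then Σ_{a ∈ F_l} E[(Φ(I,a) − 1/|F_l|)²] = (1/|I|) · ( (|F_l|−1)/|F_l| + (1/(|I|·|F_l|)) Σ_{ψ ≠ 0} Σ_{k_1 ≠ k_2} E[ψ(Z)]^{|I(k_1)\I(k_2)|} · E[ψ(−Z)]^{|I(k_2)\I(k_1)|} ), where ψ runs over nontrivial additive characters of F_l and Z is distributed as tr(X). -/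
/-!
Write `c_a = #{k | S(I k) = a}`, `n = |κ|`, `q = |F_l|`. Since `∑ a, c_a = n`, the sum over `a` of
`(c_a / n - 1 / q)²` is `#{(k₁, k₂) | S(I k₁) = S(I k₂)} / n² - 1 / q`, and orthogonality of
additive characters writes the coincidence count as `q⁻¹ ∑_ψ ∑_{k₁,k₂} ψ (S(I k₁) - S(I k₂))`; the
trivial character contributes exactly the `1 / q` that is subtracted. Averaging over the independent
coordinates, `S(I k₁) - S(I k₂)` is a sum over `I k₁ \ I k₂` minus a sum over the disjoint set
`I k₂ \ I k₁`, so `E ψ (S(I k₁) - S(I k₂))` factors as `E[ψ Z]^{…} · E[ψ (-Z)]^{…}`, which is `1` on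
the diagonal `k₁ = k₂`.
-/
open Finset

namespace AddChar
variable {A M ι : Type*} [AddCommMonoid A] [CommMonoid M]

lemma map_sum_eq_prod (ψ : AddChar A M) (s : Finset ι) (f : ι → A) :
    ψ (∑ i ∈ s, f i) = ∏ i ∈ s, ψ (f i) :=
  map_prod ψ.toMonoidHom (fun i => Multiplicative.ofAdd (f i)) s

lemma card_filter_ne_zero {A : Type*} [AddCommGroup A] [Fintype A] [DecidableEq (AddChar A ℂ)] :
    #(univ.filter fun ψ : AddChar A ℂ => ψ ≠ 0) = Fintype.card A - 1 := by
  rw [filter_ne', card_erase_of_mem (mem_univ _), card_univ, card_eq]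

end AddChar

lemma prod_union_ite_mem {ι M : Type*} [CommMonoid M] [DecidableEq ι] {s t : Finset ι}
    (hst : Disjoint s t) (f g : ι → M) :
    ∏ i ∈ s ∪ t, (if i ∈ s then f i else g i) = (∏ i ∈ s, f i) * ∏ i ∈ t, g i := by
  rw [prod_ite, filter_mem_eq_inter, union_inter_cancel_left, filter_not, filter_mem_eq_inter,
    union_inter_cancel_left, union_sdiff_left, sdiff_eq_self_of_disjoint hst.symm]

lemma sum_prod_type_eq_card_add_sum_ne {κ M : Type*} [Fintype κ] [DecidableEq κ]
    [AddCommMonoidWithOne M] (g : κ × κ → M) (hg : ∀ k, g (k, k) = 1) :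
    ∑ kk, g kk = Fintype.card κ + ∑ kk ∈ univ.filter (fun kk : κ × κ => kk.1 ≠ kk.2), g kk := by
  rw [← sum_filter_add_sum_filter_not univ (fun kk : κ × κ => kk.1 = kk.2)]
  congr 1
  have hdiag : ∀ kk ∈ univ.filter (fun kk : κ × κ => kk.1 = kk.2), g kk = 1 := by
    rintro ⟨k, k'⟩ h
    simp only [mem_filter, mem_univ, true_and] at h
    exact h ▸ hg k
  rw [sum_congr rfl hdiag, sum_const, nsmul_one,
    ← univ_product_univ, ← diag_eq_filter, diag_card, card_univ]

section Average
variable {ι G K : Type*} [Fintype ι] [DecidableEq ι] [Fintype G] [Nonempty G] [Field K]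
  [CharZero K]

lemma average_prod_eq_prod_average (s : Finset ι) (F : ι → G → K) :
    1 / (Fintype.card (ι → G) : K) * ∑ ω : ι → G, ∏ i ∈ s, F i (ω i) =
      ∏ i ∈ s, (1 / (Fintype.card G : K) * ∑ v, F i v) := by
  have hG : (Fintype.card G : K) ≠ 0 := Nat.cast_ne_zero.2 Fintype.card_ne_zero
  set F' : ι → G → K := fun i v => if i ∈ s then F i v else 1
  have hprod (ω : ι → G) : ∏ i ∈ s, F i (ω i) = ∏ i, F' i (ω i) := by
    simp only [F', prod_ite_mem, univ_inter]
  have haverage (i : ι) : 1 / (Fintype.card G : K) * ∑ v, F' i v =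
      if i ∈ s then 1 / (Fintype.card G : K) * ∑ v, F i v else 1 := by
    by_cases hi : i ∈ s
    · simp [F', hi]
    · simp [F', hi, hG]
  rw [sum_congr rfl fun ω _ => hprod ω, ← Fintype.prod_sum, Fintype.card_fun, Nat.cast_pow,
    ← one_div_pow, ← Finset.card_univ (α := ι), ← prod_const, ← prod_mul_distrib]
  simp only [haverage, prod_ite_mem, univ_inter]

variable {A : Type*} [AddCommGroup A]

lemma average_addChar_sum_sub_sum_of_disjoint (tr : G → A) (ψ : AddChar A K) {s t : Finset ι}
    (hst : Disjoint s t) :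
    1 / (Fintype.card (ι → G) : K) * ∑ ω : ι → G, ψ (∑ i ∈ s, tr (ω i) - ∑ i ∈ t, tr (ω i)) =
      (1 / (Fintype.card G : K) * ∑ v, ψ (tr v)) ^ #s *
        (1 / (Fintype.card G : K) * ∑ v, ψ (-tr v)) ^ #t := by
  set F : ι → G → K := fun i => if i ∈ s then fun v => ψ (tr v) else fun v => ψ (-tr v)
  have hsplit (ω : ι → G) : ψ (∑ i ∈ s, tr (ω i) - ∑ i ∈ t, tr (ω i)) =
      ∏ i ∈ s ∪ t, F i (ω i) := by
    rw [sub_eq_add_neg, ← sum_neg_distrib, AddChar.map_add_eq_mul, AddChar.map_sum_eq_prod,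
      AddChar.map_sum_eq_prod, ← prod_union_ite_mem hst]
    exact prod_congr rfl fun i _ => by simp only [F, ite_apply]
  rw [sum_congr rfl fun ω _ => hsplit ω, average_prod_eq_prod_average]
  simp only [F, apply_ite (fun f : G → K => 1 / (Fintype.card G : K) * ∑ v, f v),
    prod_union_ite_mem hst, prod_const]

lemma average_addChar_sum_sub_sum (tr : G → A) (ψ : AddChar A K) (s t : Finset ι) :
    1 / (Fintype.card (ι → G) : K) * ∑ ω : ι → G, ψ (∑ i ∈ s, tr (ω i) - ∑ i ∈ t, tr (ω i)) =
      (1 / (Fintype.card G : K) * ∑ v, ψ (tr v)) ^ #(s \ t) *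
        (1 / (Fintype.card G : K) * ∑ v, ψ (-tr v)) ^ #(t \ s) := by
  simp only [← sum_sdiff_sub_sum_sdiff (s₁ := t)]
  exact average_addChar_sum_sub_sum_of_disjoint tr ψ disjoint_sdiff_sdiff

end Average

section Fibers
variable {κ A : Type*} [Fintype κ] [Fintype A]

lemma sum_card_fiber_sq [DecidableEq A] (f : κ → A) :
    ∑ a, #{k | f k = a} ^ 2 = #{kk : κ × κ | f kk.1 = f kk.2} := by
  rw [card_eq_sum_card_fiberwise (f := fun kk : κ × κ => f kk.1) (t := univ)
    (fun _ _ => mem_univ _)]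
  refine sum_congr rfl fun a _ => ?_
  rw [sq, ← card_product, filter_filter]
  congr 1
  ext kk
  simp only [mem_product, mem_filter, mem_univ, true_and]
  constructor
  · rintro ⟨h1, h2⟩; exact ⟨h1.trans h2.symm, h1⟩
  · rintro ⟨h, h1⟩; exact ⟨h1, h ▸ h1⟩

lemma sum_div_sub_inv_card_sq {K : Type*} [Field K] (c : A → K) {n : K} (hn : n ≠ 0)
    (hc : ∑ a, c a = n) (hq : (Fintype.card A : K) ≠ 0) :
    ∑ a, (c a / n - 1 / Fintype.card A) ^ 2 = (∑ a, c a ^ 2) / n ^ 2 - 1 / Fintype.card A := by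
  simp only [sub_sq, sum_add_distrib, sum_sub_distrib, div_pow, ← sum_div, ← sum_mul, ← mul_sum,
    mul_div_assoc, hc, sum_const, card_univ, nsmul_eq_mul]
  field_simp
  ring

variable [AddCommGroup A] [DecidableEq A]

lemma card_coincidences_mul_card_eq_sum_addChar (f : κ → A) :
    (#{kk : κ × κ | f kk.1 = f kk.2} : ℂ) * Fintype.card A =
      ∑ ψ : AddChar A ℂ, ∑ kk : κ × κ, ψ (f kk.1 - f kk.2) := by
  simp only [sum_comm (γ := AddChar A ℂ), AddChar.sum_apply_eq_ite, sub_eq_zero, sum_ite,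
    sum_const_zero, add_zero, sum_const, nsmul_eq_mul]

lemma sum_fiber_freq_sub_sq_eq_sum_addChar [Nonempty κ] [DecidableEq (AddChar A ℂ)]
    (f : κ → A) :
    ∑ a, ((#{k | f k = a} : ℂ) / Fintype.card κ - 1 / Fintype.card A) ^ 2 =
      1 / ((Fintype.card κ : ℂ) ^ 2 * Fintype.card A) *
        ∑ ψ ∈ univ.filter (fun ψ : AddChar A ℂ => ψ ≠ 0), ∑ kk : κ × κ, ψ (f kk.1 - f kk.2) := by
  have hn : (Fintype.card κ : ℂ) ≠ 0 := Nat.cast_ne_zero.2 Fintype.card_ne_zero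
  have hq : (Fintype.card A : ℂ) ≠ 0 := Nat.cast_ne_zero.2 Fintype.card_ne_zero
  have htotal : ∑ a, (#{k | f k = a} : ℂ) = Fintype.card κ := by
    exact_mod_cast (card_eq_sum_card_fiberwise (s := univ) (t := univ) fun _ _ => mem_univ _).symm
  have htrivial :
      ∑ kk : κ × κ, (0 : AddChar A ℂ) (f kk.1 - f kk.2) = (Fintype.card κ : ℂ) ^ 2 := by
    simp [sq]
  rw [sum_div_sub_inv_card_sq _ hn htotal hq]
  have hsq := card_coincidences_mul_card_eq_sum_addChar f
  rw [← sum_card_fiber_sq] at hsq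
  push_cast at hsq
  rw [← add_sum_erase univ (fun ψ : AddChar A ℂ => ∑ kk : κ × κ, ψ (f kk.1 - f kk.2))
    (mem_univ 0), htrivial] at hsq
  rw [filter_ne']
  field_simp
  linear_combination hsq

end Fibers

open scoped Classical in
theorem stmt13 {G Fl ι κ : Type} [Group G] [Fintype G] [Field Fl] [Fintype Fl]
    [Fintype ι] [Fintype κ] [Nonempty κ]
    (tr : G → Fl) (I : κ → Finset ι) :
    (∑ a : Fl, (1 / (Fintype.card (ι → G) : ℂ)) * ∑ ω : ι → G,
        (((Finset.univ.filter fun k : κ => (∑ i ∈ I k, tr (ω i)) = a).card : ℂ) /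
            (Fintype.card κ : ℂ) - 1 / (Fintype.card Fl : ℂ)) ^ 2) =
      (1 / (Fintype.card κ : ℂ)) *
        (((Fintype.card Fl : ℂ) - 1) / (Fintype.card Fl : ℂ) +
          (1 / ((Fintype.card κ : ℂ) * (Fintype.card Fl : ℂ))) *
            ∑ ψ ∈ Finset.univ.filter (fun ψ : AddChar Fl ℂ => ψ ≠ 0),
              ∑ kk ∈ Finset.univ.filter (fun kk : κ × κ => kk.1 ≠ kk.2),
                ((1 / (Fintype.card G : ℂ)) * ∑ v : G, ψ (tr v)) ^ (I kk.1 \ I kk.2).card *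
                  ((1 / (Fintype.card G : ℂ)) * ∑ v : G, ψ (-tr v)) ^
                    (I kk.2 \ I kk.1).card) := by
  have hn : (Fintype.card κ : ℂ) ≠ 0 := Nat.cast_ne_zero.2 Fintype.card_ne_zero
  have hq : (Fintype.card Fl : ℂ) ≠ 0 := Nat.cast_ne_zero.2 Fintype.card_ne_zero
  have hnontrivial : (#(univ.filter fun ψ : AddChar Fl ℂ => ψ ≠ 0) : ℂ) = Fintype.card Fl - 1 := by
    rw [AddChar.card_filter_ne_zero, Nat.cast_pred Fintype.card_pos]
  set n : ℂ := (Fintype.card κ : ℂ)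
  set q : ℂ := (Fintype.card Fl : ℂ)
  set S : κ → (ι → G) → Fl := fun k ω => ∑ i ∈ I k, tr (ω i)
  set P : AddChar Fl ℂ → κ × κ → ℂ := fun ψ kk =>
    ((1 / (Fintype.card G : ℂ)) * ∑ v : G, ψ (tr v)) ^ (I kk.1 \ I kk.2).card *
      ((1 / (Fintype.card G : ℂ)) * ∑ v : G, ψ (-tr v)) ^ (I kk.2 \ I kk.1).card
  have hdiag (ψ : AddChar Fl ℂ) (k : κ) : P ψ (k, k) = 1 := by simp [P]
  calc _ = 1 / (Fintype.card (ι → G) : ℂ) * ∑ ω : ι → G, 1 / (n ^ 2 * q) *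
        ∑ ψ ∈ univ.filter (fun ψ : AddChar Fl ℂ => ψ ≠ 0),
          ∑ kk : κ × κ, ψ (S kk.1 ω - S kk.2 ω) := by
        rw [← mul_sum, sum_comm]
        congr 1
        refine sum_congr rfl fun ω _ => ?_
        exact sum_fiber_freq_sub_sq_eq_sum_addChar (S · ω)
    _ = 1 / (n ^ 2 * q) *
        ∑ ψ ∈ univ.filter (fun ψ : AddChar Fl ℂ => ψ ≠ 0), ∑ kk : κ × κ, P ψ kk := by
        rw [← mul_sum, mul_left_comm]
        congr 1
        rw [sum_comm, mul_sum]
        refine sum_congr rfl fun ψ _ => ?_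
        rw [sum_comm, mul_sum]
        exact sum_congr rfl fun kk _ => average_addChar_sum_sub_sum tr ψ _ _
    _ = 1 / n * ((q - 1) / q + 1 / (n * q) * ∑ ψ ∈ univ.filter (fun ψ : AddChar Fl ℂ => ψ ≠ 0),
          ∑ kk ∈ univ.filter (fun kk : κ × κ => kk.1 ≠ kk.2), P ψ kk) := by
        simp only [sum_prod_type_eq_card_add_sum_ne _ (hdiag _), sum_add_distrib, sum_const,
          hnontrivial, nsmul_eq_mul]
        field_simp
        ring
end
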